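/- arXiv:2107.02363 — 2 statements merged into one kernel-verified Lean document; each statement's English description precedes it below -/
import Mathlib

section
/- Let $g : [0,1] \to [0,1]$ be measurable with $g^{-1} \in L^{\gamma}([0,1])$ for some $\gamma \in [1, \infty)$, and let $\alpha \in (0,1]$. Then the function $f(x,y) := (g(x)g(y)^{\alpha} + g(x)^{\alpha}g(y))^{-1}$ belongs to $L^{\tilde\gamma}([0,1]^2)$ where $\tilde\gamma = \min\{\gamma, \gamma/\alpha\}$. -/
/-!
Since `g ≤ 1` and `α ≤ 1`, we have `g(y) ≤ g(y)^α`, so `f(x,y) ≤ g(x)⁻¹ g(y)⁻¹`. By Tonelli the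
`γ`-th power of this tensor product integrates to `‖g⁻¹‖_γ^{2γ}`, so `f ∈ L^γ([0,1]²)`, and on a
finite measure space `L^γ ⊆ L^{min(γ, γ/α)}`.
-/

open MeasureTheory ENNReal

theorem MeasureTheory.MemLp.mul_prod {α β L : Type*} [MeasurableSpace α] [MeasurableSpace β]
    {μ : Measure α} {ν : Measure β} [SFinite ν] [NormedRing L] [NormMulClass L]
    {f : α → L} {g : β → L} {p : ℝ≥0∞} (hp : p ≠ ∞) (hf : MemLp f p μ) (hg : MemLp g p ν) :
    MemLp (fun z : α × β => f z.1 * g z.2) p (μ.prod ν) := by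
  have hmeas : AEStronglyMeasurable (fun z : α × β => f z.1 * g z.2) (μ.prod ν) :=
    hf.1.comp_fst.mul hg.1.comp_snd
  rcases eq_or_ne p 0 with rfl | hp0
  · exact memLp_zero_iff_aestronglyMeasurable.2 hmeas
  rw [← integrable_norm_rpow_iff hmeas hp0 hp]
  simpa only [norm_mul, Real.mul_rpow (norm_nonneg _) (norm_nonneg _)] using
    (hf.integrable_norm_rpow hp0 hp).mul_prod (hg.integrable_norm_rpow hp0 hp)

/-- Where `a` or `b` vanishes, both sides are `0` (as `0 ^ α = 0` and `0⁻¹ = 0`). -/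
theorem Real.inv_mul_rpow_add_rpow_mul_le {a b α : ℝ} (ha : 0 ≤ a) (hb : 0 ≤ b) (hb1 : b ≤ 1)
    (hα : 0 < α) (hα1 : α ≤ 1) : (a * b ^ α + a ^ α * b)⁻¹ ≤ a⁻¹ * b⁻¹ := by
  rcases ha.eq_or_lt with rfl | ha
  · simp [Real.zero_rpow hα.ne']
  rcases hb.eq_or_lt with rfl | hb
  · simp [Real.zero_rpow hα.ne']
  rw [← mul_inv]
  apply inv_anti₀ (by positivity)
  have := mul_le_mul_of_nonneg_left (Real.self_le_rpow_of_le_one hb.le hb1 hα1) ha.le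
  nlinarith [Real.rpow_nonneg ha.le α]

theorem reciprocal_degree_product_Lp_general (g : ℝ → ℝ) (γ α : ℝ)
    (hα : 0 < α) (hα1 : α ≤ 1)
    (hrange : ∀ x ∈ Set.Icc (0:ℝ) 1, g x ∈ Set.Icc (0:ℝ) 1)
    (hLp : MemLp (fun x => (g x)⁻¹) (ENNReal.ofReal γ)
      (volume.restrict (Set.Icc (0:ℝ) 1))) :
    MemLp (fun z : ℝ × ℝ => (g z.1 * g z.2 ^ α + g z.1 ^ α * g z.2)⁻¹)
      (ENNReal.ofReal (min γ (γ / α)))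
      (volume.restrict (Set.Icc (0:ℝ) 1 ×ˢ Set.Icc (0:ℝ) 1)) := by
  have hsquare : ∀ᵐ z ∂(volume.restrict (Set.Icc (0:ℝ) 1 ×ˢ Set.Icc (0:ℝ) 1)),
      z ∈ Set.Icc (0:ℝ) 1 ×ˢ Set.Icc (0:ℝ) 1 :=
    ae_restrict_mem (measurableSet_Icc.prod measurableSet_Icc)
  rw [Measure.volume_eq_prod, ← Measure.prod_restrict] at hsquare ⊢
  have hg : AEMeasurable g (volume.restrict (Set.Icc (0:ℝ) 1)) := by
    simpa [Pi.inv_def] using hLp.1.aemeasurable.inv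
  refine MemLp.mono_exponent ?_ (ofReal_le_ofReal (min_le_left _ _))
  refine (hLp.mul_prod ofReal_ne_top hLp).mono
    (AEMeasurable.aestronglyMeasurable (by fun_prop)) ?_
  filter_upwards [hsquare] with z ⟨hx, hy⟩
  obtain ⟨hgx, -⟩ := hrange _ hx
  obtain ⟨hgy, hgy1⟩ := hrange _ hy
  calc ‖(g z.1 * g z.2 ^ α + g z.1 ^ α * g z.2)⁻¹‖
      = (g z.1 * g z.2 ^ α + g z.1 ^ α * g z.2)⁻¹ := Real.norm_of_nonneg (by positivity)
    _ ≤ (g z.1)⁻¹ * (g z.2)⁻¹ := Real.inv_mul_rpow_add_rpow_mul_le hgx hgy hgy1 hα hα1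
    _ ≤ ‖(g z.1)⁻¹ * (g z.2)⁻¹‖ := Real.le_norm_self _

/-- If `g : [0,1] → [0,1]` has `g⁻¹ ∈ L^γ([0,1])` and `α ∈ (0,1]`, then
`f(x,y) = (g(x)g(y)^α + g(x)^α g(y))⁻¹` belongs to `L^{min{γ, γ/α}}([0,1]²)`. -/
theorem reciprocal_degree_product_Lp (g : ℝ → ℝ) (γ α : ℝ)
    (hγ : 1 ≤ γ) (hα : 0 < α) (hα1 : α ≤ 1)
    (hmeas : Measurable g)
    (hrange : ∀ x ∈ Set.Icc (0:ℝ) 1, g x ∈ Set.Icc (0:ℝ) 1)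
    (hpos : ∀ᵐ x ∂(volume.restrict (Set.Icc (0:ℝ) 1)), 0 < g x)
    (hLp : MemLp (fun x => (g x)⁻¹) (ENNReal.ofReal γ)
      (volume.restrict (Set.Icc (0:ℝ) 1))) :
    MemLp (fun z : ℝ × ℝ => (g z.1 * g z.2 ^ α + g z.1 ^ α * g z.2)⁻¹)
      (ENNReal.ofReal (min γ (γ / α)))
      (volume.restrict (Set.Icc (0:ℝ) 1 ×ˢ Set.Icc (0:ℝ) 1)) :=
  reciprocal_degree_product_Lp_general g γ α hα hα1 hrange hLp
end

section
/- Consider minimizing, over symmetric positive semidefinite $2\times2$ matrices $K = \begin{pmatrix} K_{11} & K_{12} \\ K_{12} & K_{11} \end{pmatrix}$ with equal diagonal, the function $F(K) = -pK_{11} + \log(1+e^{K_{11}}) - qK_{12} + \log(1+e^{K_{12}})$ where $p, q \in (0,1)$ and the PSD constraint amounts to $K_{11} \ge 0$ and $K_{11} \ge |K_{12}|$. Then the unique minimizer is: (a) $K_{11} = \sigma^{-1}(p)$, $K_{12} = \sigma^{-1}(q)$ if $p \ge q$ and $p + q \ge 1$; (b) $K_{11} = -K_{12} = \sigma^{-1}((1+p-q)/2)$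 if $p \ge q$ and $p + q < 1$; (c) $K_{11} = K_{12} = \sigma^{-1}((p+q)/2)$ if $p < q$ and $p + q \ge 1$; (d) $K_{11} = K_{12} = 0$ otherwise; where $\sigma^{-1}(y) = \log(y/(1-y))$ is the inverse sigmoid. -/
/-! The softplus `t ↦ log (1 + exp t)` is strictly convex with derivative the sigmoid `σ`, so the
risk lies strictly above its tangent plane at any point `m`. Hence a point `m` of the cone at
which the gradient `(σ m₁ - p, σ m₂ - q)` has nonnegative inner product with `K - m` for every
`K` in the cone is the unique minimizer. In each of the four regimes the candidate satisfies this
first-order condition: at `(σ⁻¹ p, σ⁻¹ q)` the gradient vanishes, on the face `K₂ = -K₁`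
(resp. `K₂ = K₁`) it is a nonnegative multiple of `(1, 1)` (resp. `(1, -1)`), and at the apex it
is a nonnegative combination of both. -/

open Real Set

noncomputable def softplus (t : ℝ) : ℝ := log (1 + exp t)

noncomputable def logit (y : ℝ) : ℝ := log (y / (1 - y))

lemma sigmoid_eq_exp_div (x : ℝ) : sigmoid x = exp x / (1 + exp x) := by
  rw [sigmoid_def, exp_neg]
  field_simp
  ring

lemma hasDerivAt_softplus (x : ℝ) : HasDerivAt softplus (sigmoid x) x := by
  rw [sigmoid_eq_exp_div]
  exact ((hasDerivAt_exp x).const_add 1).log (by positivity)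

lemma strictConvexOn_softplus : StrictConvexOn ℝ univ softplus := by
  have hderiv : deriv softplus = sigmoid := funext fun x => (hasDerivAt_softplus x).deriv
  refine StrictMono.strictConvexOn_univ_of_deriv ?_ (hderiv ▸ sigmoid_strictMono)
  exact continuous_iff_continuousAt.mpr fun x => (hasDerivAt_softplus x).continuousAt

lemma softplus_add_sigmoid_mul_lt {s t : ℝ} (h : t ≠ s) :
    softplus s + sigmoid s * (t - s) < softplus t := by
  rcases h.lt_or_gt with hts | hst
  · have := strictConvexOn_softplus.slope_lt_of_hasDerivAt (mem_univ t) (mem_univ s) hts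
      (hasDerivAt_softplus s)
    rw [slope_def_field, div_lt_iff₀ (by linarith)] at this
    linarith
  · have := strictConvexOn_softplus.lt_slope_of_hasDerivAt (mem_univ s) (mem_univ t) hst
      (hasDerivAt_softplus s)
    rw [slope_def_field, lt_div_iff₀ (by linarith)] at this
    linarith

lemma softplus_add_sigmoid_mul_le (s t : ℝ) : softplus s + sigmoid s * (t - s) ≤ softplus t := by
  rcases eq_or_ne t s with rfl | h
  · simp
  · exact (softplus_add_sigmoid_mul_lt h).le

lemma sigmoid_logit {y : ℝ} (h0 : 0 < y) (h1 : y < 1) : sigmoid (logit y) = y := by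
  have : 0 < 1 - y := by linarith
  rw [sigmoid_eq_exp_div, logit, exp_log (div_pos h0 this)]
  field_simp
  ring

lemma logit_le_logit {a b : ℝ} (ha : 0 < a) (hab : a ≤ b) (hb : b < 1) : logit a ≤ logit b := by
  rw [← sigmoid_le_iff, sigmoid_logit ha (by linarith), sigmoid_logit (by linarith) hb]
  exact hab

lemma logit_one_half : logit (1 / 2) = 0 := by norm_num [logit]

lemma logit_nonneg {a : ℝ} (ha : 1 / 2 ≤ a) (ha1 : a < 1) : 0 ≤ logit a :=
  logit_one_half ▸ logit_le_logit (by norm_num) ha ha1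

lemma logit_one_sub (y : ℝ) : logit (1 - y) = -logit y := by
  rw [logit, logit, sub_sub_cancel, ← inv_div, log_inv]

def IsUniqueMinOn {α β : Type*} [Preorder β] (f : α → β) (s : Set α) (m : α) : Prop :=
  m ∈ s ∧ ∀ x ∈ s, x ≠ m → f m < f x

-- `(a, b)` stands for the matrix `!![a, b; b, a]`, which is positive semidefinite iff `|b| ≤ a`.
def psdCone : Set (ℝ × ℝ) := {K | 0 ≤ K.1 ∧ |K.2| ≤ K.1}

noncomputable def risk (p q : ℝ) (K : ℝ × ℝ) : ℝ :=
  -p * K.1 + softplus K.1 - q * K.2 + softplus K.2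

lemma risk_lt_of_variational {p q : ℝ} {m K : ℝ × ℝ}
    (hvi : 0 ≤ (sigmoid m.1 - p) * (K.1 - m.1) + (sigmoid m.2 - q) * (K.2 - m.2))
    (hne : K ≠ m) : risk p q m < risk p q K := by
  rw [Ne, Prod.ext_iff, not_and_or] at hne
  unfold risk
  rcases hne with h | h
  · linarith [softplus_add_sigmoid_mul_lt h, softplus_add_sigmoid_mul_le m.2 K.2]
  · linarith [softplus_add_sigmoid_mul_le m.1 K.1, softplus_add_sigmoid_mul_lt h]

lemma isUniqueMinOn_risk_of_variational {p q : ℝ} {m : ℝ × ℝ} (hm : m ∈ psdCone)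
    (hvi : ∀ K ∈ psdCone, 0 ≤ (sigmoid m.1 - p) * (K.1 - m.1) + (sigmoid m.2 - q) * (K.2 - m.2)) :
    IsUniqueMinOn (risk p q) psdCone m :=
  ⟨hm, fun K hK hne => risk_lt_of_variational (hvi K hK) hne⟩

lemma isUniqueMinOn_risk_interior {p q : ℝ} (hp : p ∈ Ioo (0 : ℝ) 1) (hq : q ∈ Ioo (0 : ℝ) 1)
    (hqp : q ≤ p) (hsum : 1 ≤ p + q) :
    IsUniqueMinOn (risk p q) psdCone (logit p, logit q) := by
  obtain ⟨hp0, hp1⟩ := hp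
  obtain ⟨hq0, hq1⟩ := hq
  have hmem : (logit p, logit q) ∈ psdCone := by
    refine ⟨logit_nonneg (by linarith) hp1, abs_le.mpr ⟨?_, logit_le_logit hq0 hqp hp1⟩⟩
    rw [← logit_one_sub]
    exact logit_le_logit (by linarith) (by linarith) hq1
  refine isUniqueMinOn_risk_of_variational hmem fun K _ => ?_
  simp [sigmoid_logit hp0 hp1, sigmoid_logit hq0 hq1]

lemma isUniqueMinOn_risk_antidiagonal {p q : ℝ} (hq0 : 0 < q) (hqp : q ≤ p)
    (hsum : p + q < 1) :
    IsUniqueMinOn (risk p q) psdCone (logit ((1 + p - q) / 2), -logit ((1 + p - q) / 2)) := by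
  have ht : 0 ≤ logit ((1 + p - q) / 2) := logit_nonneg (by linarith) (by linarith)
  refine isUniqueMinOn_risk_of_variational ⟨ht, by rw [abs_neg, abs_of_nonneg ht]⟩
    fun K ⟨_, hK⟩ => ?_
  rw [sigmoid_neg, sigmoid_logit (by linarith) (by linarith)]
  have hK' : 0 ≤ K.1 + K.2 := by linarith [(abs_le.mp hK).1]
  linarith [mul_nonneg (by linarith : (0 : ℝ) ≤ (1 - p - q) / 2) hK']

lemma isUniqueMinOn_risk_diagonal {p q : ℝ} (hq1 : q < 1) (hpq : p < q) (hsum : 1 ≤ p + q) :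
    IsUniqueMinOn (risk p q) psdCone (logit ((p + q) / 2), logit ((p + q) / 2)) := by
  have ht : 0 ≤ logit ((p + q) / 2) := logit_nonneg (by linarith) (by linarith)
  refine isUniqueMinOn_risk_of_variational ⟨ht, (abs_of_nonneg ht).le⟩ fun K ⟨_, hK⟩ => ?_
  rw [sigmoid_logit (by linarith) (by linarith)]
  have hK' : 0 ≤ K.1 - K.2 := by linarith [(abs_le.mp hK).2]
  linarith [mul_nonneg (by linarith : (0 : ℝ) ≤ (q - p) / 2) hK']

lemma isUniqueMinOn_risk_zero {p q : ℝ} (hpq : p ≤ q) (hsum : p + q ≤ 1) :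
    IsUniqueMinOn (risk p q) psdCone (0, 0) := by
  refine isUniqueMinOn_risk_of_variational ⟨le_rfl, by simp⟩ fun K ⟨_, hK⟩ => ?_
  have h₁ : 0 ≤ K.1 + K.2 := by linarith [(abs_le.mp hK).1]
  have h₂ : 0 ≤ K.1 - K.2 := by linarith [(abs_le.mp hK).2]
  rw [sigmoid_zero]
  linarith [mul_nonneg (by linarith : (0 : ℝ) ≤ (1 - p - q) / 2) h₁,
    mul_nonneg (by linarith : (0 : ℝ) ≤ (q - p) / 2) h₂]

/-- Closed form for the minimizer of the two-community SBM population risk over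
PSD `2×2` matrices with equal diagonal: minimizing
`F(K) = -pK₁₁ + log(1+e^{K₁₁}) - qK₁₂ + log(1+e^{K₁₂})` over
`{(K₁₁,K₁₂) : K₁₁ ≥ 0, |K₁₂| ≤ K₁₁}` has the unique minimizer given by the
four cases in terms of the inverse sigmoid `σ⁻¹(y) = log(y/(1-y))`. -/
theorem sbm_two_community_minimizer (p q : ℝ)
    (hp : p ∈ Set.Ioo (0:ℝ) 1) (hq : q ∈ Set.Ioo (0:ℝ) 1) :
    let logit : ℝ → ℝ := fun y => Real.log (y / (1 - y))
    let F : ℝ × ℝ → ℝ := fun K =>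
      -p * K.1 + Real.log (1 + Real.exp K.1) - q * K.2 + Real.log (1 + Real.exp K.2)
    let S : Set (ℝ × ℝ) := {K | 0 ≤ K.1 ∧ |K.2| ≤ K.1}
    let m : ℝ × ℝ :=
      if q ≤ p ∧ 1 ≤ p + q then (logit p, logit q)
      else if q ≤ p ∧ p + q < 1 then
        (logit ((1 + p - q) / 2), -logit ((1 + p - q) / 2))
      else if p < q ∧ 1 ≤ p + q then (logit ((p + q) / 2), logit ((p + q) / 2))
      else (0, 0)
    m ∈ S ∧ ∀ K ∈ S, K ≠ m → F m < F K := by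
  dsimp only
  split_ifs with h₁ h₂ h₃
  · exact isUniqueMinOn_risk_interior hp hq h₁.1 h₁.2
  · exact isUniqueMinOn_risk_antidiagonal hq.1 h₂.1 h₂.2
  · exact isUniqueMinOn_risk_diagonal hq.2 h₃.1 h₃.2
  · have hpq : p < q := by
      by_contra! hqp
      rcases lt_or_ge (p + q) 1 with hsum | hsum
      exacts [h₂ ⟨hqp, hsum⟩, h₁ ⟨hqp, hsum⟩]
    exact isUniqueMinOn_risk_zero hpq.le (not_le.mp fun hsum => h₃ ⟨hpq, hsum⟩).le
end
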